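/- For g = diag(2ⁿ, 1) ∈ GL₂(ℚ₂) with n ≥ 1 and the sets Eᵢ := eᵢ + 2M₂(ℤ₂)⁰ as above, one has ⟨1_{g E_i g^{-1}}, 1_{E_j}⟩_{L²} = 0 unless (i,j) = (2,3), in which case it equals 2^{−3−n}; consequently Σ_{i,j} ⟨Ad(g)1_{Eᵢ}, 1_{E_j}⟩ = 2^{−3−n}. -/

import Mathlib

/-!
Each Eᵢ is a product of 2-adic closed balls of radius 1/2, and conjugation by diag(2ⁿ, 1)
multiplies the b- and c-coordinates by 2ⁿ and 2⁻ⁿ. For E₁ and E₃ the c-coordinate is a unit,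
so after conjugation it has norm 2ⁿ > 1 and the image misses every Eⱼ. For E₂ the b-coordinate
becomes divisible by 2ⁿ, so the image misses E₁ and E₂ (b a unit) and meets E₃ in the box
(1 + 2ℤ₂) × (2ⁿ + 2ⁿ⁺¹ℤ₂) × (1 + 2ℤ₂). A box with radii p^{-mᵢ} has Haar measure p^{-Σ mᵢ}
times that of the unit box, since p^{Σ mᵢ} disjoint translates of it, centred at the residues
given by `PadicInt.appr`, tile the unit box.
-/

open MeasureTheory

/-- Trace-zero `2×2` matrices over `ℚ₂` in the coordinates `(a b; c −a) ↦ (a,b,c)`. -/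
abbrev B20 : Type := Fin 3 → ℚ_[2]

/-- The coset `e + 2M₂(ℤ₂)⁰` for `e` integral, in coordinates. -/
def Ecoset (e : Fin 3 → ℚ_[2]) : Set B20 := {v | ∀ i, ‖v i - e i‖ ≤ 2⁻¹}

/-- `e₁ = (0 1; 1 0)` in coordinates. -/
noncomputable def e1 : Fin 3 → ℚ_[2] := ![0, 1, 1]
/-- `e₂ = (1 1; 0 −1)` in coordinates. -/
noncomputable def e2 : Fin 3 → ℚ_[2] := ![1, 1, 0]
/-- `e₃ = (1 0; 1 −1)` in coordinates. -/
noncomputable def e3 : Fin 3 → ℚ_[2] := ![1, 0, 1]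

/-- Conjugation by `g = diag(2ⁿ, 1)` in coordinates: `(a,b,c) ↦ (a, 2ⁿb, 2⁻ⁿc)`. -/
noncomputable def conjDiag (n : ℕ) (v : B20) : B20 :=
  ![v 0, (2 : ℚ_[2]) ^ n * v 1, ((2 : ℚ_[2]) ^ n)⁻¹ * v 2]

/-- The three cosets `Eᵢ = eᵢ + 2M₂(ℤ₂)⁰` indexed by `Fin 3`. -/
noncomputable def Es : Fin 3 → Set B20 := ![Ecoset e1, Ecoset e2, Ecoset e3]

open Set Metric
open scoped ENNReal

theorem IsUltrametricDist.closedBall_subset_closedBall_of_mem {X : Type*} [PseudoMetricSpace X]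
    [IsUltrametricDist X] {x y : X} {r s : ℝ} (hy : y ∈ closedBall x s) (hrs : r ≤ s) :
    closedBall y r ⊆ closedBall x s :=
  closedBall_eq_of_mem hy ▸ closedBall_subset_closedBall hrs

theorem image_mul_univ_pi_closedBall {ι 𝕜 : Type*} [NormedField 𝕜] {s : ι → 𝕜}
    (hs : ∀ i, s i ≠ 0) (c : ι → 𝕜) (r : ι → ℝ) :
    (s * ·) '' univ.pi (fun i => closedBall (c i) (r i)) =
      univ.pi fun i => closedBall (s i * c i) (‖s i‖ * r i) := by
  change Pi.map (fun i => (s i * ·)) '' _ = _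
  rw [piMap_image_univ_pi]
  congr 1
  funext i
  exact (image_smul (a := s i)).trans (smul_closedBall' (hs i) (c i) (r i))

namespace Padic

variable {p : ℕ} [Fact p.Prime]

theorem closedBall_zero_one_eq_iUnion_closedBall_natCast (m : ℕ) :
    closedBall (0 : ℚ_[p]) 1 =
      ⋃ k : Fin (p ^ m), closedBall ((k : ℕ) : ℚ_[p]) ((p : ℝ)⁻¹ ^ m) := by
  refine subset_antisymm (fun x hx => ?_) (iUnion_subset fun k => ?_)
  · rw [mem_closedBall_zero_iff] at hx
    set y : ℤ_[p] := ⟨x, hx⟩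
    have hy := (PadicInt.norm_le_pow_iff_mem_span_pow _ m).2 (y.appr_spec m)
    refine mem_iUnion.2 ⟨⟨y.appr m, y.appr_lt m⟩, ?_⟩
    rw [PadicInt.norm_def, PadicInt.coe_sub, PadicInt.coe_natCast] at hy
    simpa [dist_eq_norm, zpow_neg, inv_pow] using hy
  · have hk : ((k : ℕ) : ℚ_[p]) ∈ closedBall 0 1 := by
      simpa using IsUltrametricDist.norm_natCast_le_one ℚ_[p] (k : ℕ)
    have hp : (p : ℝ)⁻¹ ≤ 1 := inv_le_one_of_one_le₀ (mod_cast (Fact.out : p.Prime).one_le)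
    rw [IsUltrametricDist.closedBall_eq_of_mem hk]
    exact closedBall_subset_closedBall (pow_le_one₀ (by positivity) hp)

theorem pairwise_disjoint_closedBall_natCast (m : ℕ) :
    Pairwise (Function.onFun Disjoint fun k : Fin (p ^ m) =>
      closedBall ((k : ℕ) : ℚ_[p]) ((p : ℝ)⁻¹ ^ m)) := by
  intro k l hkl
  refine (IsUltrametricDist.closedBall_eq_or_disjoint _ _ _).resolve_left fun h => hkl ?_
  have hmem : ((k : ℕ) : ℚ_[p]) ∈ closedBall ((l : ℕ) : ℚ_[p]) ((p : ℝ)⁻¹ ^ m) :=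
    h ▸ mem_closedBall_self (by positivity)
  have hdvd : ((p ^ m : ℕ) : ℤ) ∣ (k : ℤ) - l := by
    rw [mem_closedBall, dist_eq_norm] at hmem
    exact_mod_cast (norm_int_le_pow_iff_dvd ((k : ℤ) - l) m).1
      (by simpa [zpow_neg, inv_pow] using hmem)
  have hzero := Int.eq_zero_of_abs_lt_dvd hdvd (by rw [abs_lt]; omega)
  exact Fin.ext (by omega)

section Measure

variable {ι : Type*} [MeasurableSpace ℚ_[p]] [BorelSpace ℚ_[p]]
  (μ : Measure (ι → ℚ_[p])) [μ.IsAddLeftInvariant]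

theorem measure_univ_pi_closedBall_eq_center_zero (c : ι → ℚ_[p]) (r : ι → ℝ) :
    μ (univ.pi fun i => closedBall (c i) (r i)) = μ (univ.pi fun i => closedBall 0 (r i)) := by
  rw [← measure_preimage_add μ c]
  congr 1
  ext v
  simp [dist_eq_norm]

theorem prod_pow_mul_measure_univ_pi_closedBall [Fintype ι] (m : ι → ℕ) :
    (∏ i, (p : ℝ≥0∞) ^ m i) * μ (univ.pi fun i => closedBall 0 ((p : ℝ)⁻¹ ^ m i)) =
      μ (univ.pi fun _ => closedBall 0 1) := by
  classical
  rw [congr_arg univ.pi (funext fun i => closedBall_zero_one_eq_iUnion_closedBall_natCast (m i)),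
    ← iUnion_univ_pi, measure_iUnion, tsum_fintype]
  · simp_rw [measure_univ_pi_closedBall_eq_center_zero μ, Finset.sum_const, Finset.card_univ,
      Fintype.card_pi, Fintype.card_fin, nsmul_eq_mul]
    push_cast
    rfl
  · intro k l hkl
    obtain ⟨i, hi⟩ := Function.ne_iff.1 hkl
    exact disjoint_univ_pi.2 ⟨i, pairwise_disjoint_closedBall_natCast _ hi⟩
  · exact fun k => MeasurableSet.univ_pi fun i => measurableSet_closedBall

theorem measure_univ_pi_closedBall_inv_pow [Fintype ι]
    (hμ : μ (univ.pi fun _ => closedBall 0 1) = 1) (c : ι → ℚ_[p]) (m : ι → ℕ) :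
    μ (univ.pi fun i => closedBall (c i) ((p : ℝ)⁻¹ ^ m i)) = ((p : ℝ≥0∞) ^ ∑ i, m i)⁻¹ := by
  refine ENNReal.eq_inv_of_mul_eq_one_left ?_
  rw [mul_comm, measure_univ_pi_closedBall_eq_center_zero, ← Finset.prod_pow_eq_pow_sum,
    prod_pow_mul_measure_univ_pi_closedBall, hμ]

end Measure

theorem norm_two : ‖(2 : ℚ_[2])‖ = 2⁻¹ := by
  simpa using norm_p (p := 2)

end Padic

noncomputable def conjDiagScale (n : ℕ) : Fin 3 → ℚ_[2] := ![1, 2 ^ n, (2 ^ n)⁻¹]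

theorem conjDiag_eq_mul (n : ℕ) : conjDiag n = (conjDiagScale n * ·) := by
  funext v i
  fin_cases i <;> simp [conjDiag, conjDiagScale]

theorem norm_conjDiag_apply_one (n : ℕ) (v : B20) : ‖conjDiag n v 1‖ = 2⁻¹ ^ n * ‖v 1‖ := by
  simp [conjDiag, Padic.norm_two]

theorem norm_conjDiag_apply_two (n : ℕ) (v : B20) : ‖conjDiag n v 2‖ = 2 ^ n * ‖v 2‖ := by
  simp [conjDiag, Padic.norm_two]

theorem Ecoset_eq_univ_pi (e : Fin 3 → ℚ_[2]) :
    Ecoset e = univ.pi fun i => closedBall (e i) 2⁻¹ := by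
  ext v
  simp [Ecoset, dist_eq_norm]

theorem norm_le_one_of_mem_Ecoset {e v : B20} (hv : v ∈ Ecoset e) {i : Fin 3} (he : ‖e i‖ ≤ 1) :
    ‖v i‖ ≤ 1 := by
  calc ‖v i‖ = ‖(v i - e i) + e i‖ := by rw [sub_add_cancel]
    _ ≤ max ‖v i - e i‖ ‖e i‖ := Padic.nonarchimedean _ _
    _ ≤ 1 := max_le ((hv i).trans (by norm_num)) he

theorem norm_eq_one_of_mem_Ecoset {e v : B20} (hv : v ∈ Ecoset e) {i : Fin 3} (he : ‖e i‖ = 1) :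
    ‖v i‖ = 1 :=
  he ▸ Padic.norm_eq_of_norm_sub_lt_right ((hv i).trans_lt (by rw [he]; norm_num))

section

variable {n : ℕ} (hn : 1 ≤ n) {e e' : Fin 3 → ℚ_[2]}
include hn

theorem disjoint_image_conjDiag_Ecoset_of_norm_apply_two (he : ‖e 2‖ = 1) (he' : ‖e' 2‖ ≤ 1) :
    Disjoint (conjDiag n '' Ecoset e) (Ecoset e') := by
  rw [disjoint_left]
  rintro _ ⟨v, hv, rfl⟩ hw
  have h := norm_le_one_of_mem_Ecoset hw he'
  rw [norm_conjDiag_apply_two, norm_eq_one_of_mem_Ecoset hv he, mul_one] at h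
  exact (one_lt_pow₀ one_lt_two (by omega)).not_ge h

theorem disjoint_image_conjDiag_Ecoset_of_norm_apply_one (he : ‖e 1‖ ≤ 1) (he' : ‖e' 1‖ = 1) :
    Disjoint (conjDiag n '' Ecoset e) (Ecoset e') := by
  rw [disjoint_left]
  rintro _ ⟨v, hv, rfl⟩ hw
  have h := norm_eq_one_of_mem_Ecoset hw he'
  have hle : 2⁻¹ ^ n * ‖v 1‖ ≤ 2⁻¹ ^ n := mul_le_of_le_one_right (by positivity)
    (norm_le_one_of_mem_Ecoset hv he)
  rw [norm_conjDiag_apply_one] at h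
  exact (pow_lt_one₀ (by norm_num) (by norm_num) (by omega)).not_ge (h ▸ hle)

end

noncomputable def cosetCenter : Fin 3 → Fin 3 → ℚ_[2] := ![e1, e2, e3]

theorem Es_eq_Ecoset (i : Fin 3) : Es i = Ecoset (cosetCenter i) := by
  fin_cases i <;> rfl

theorem norm_cosetCenter_le_one (i k : Fin 3) : ‖cosetCenter i k‖ ≤ 1 := by
  fin_cases i <;> fin_cases k <;> simp [cosetCenter, e1, e2, e3]

theorem disjoint_image_conjDiag_Es {n : ℕ} (hn : 1 ≤ n) {i j : Fin 3} (hij : ¬(i = 1 ∧ j = 2)) :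
    Disjoint (conjDiag n '' Es i) (Es j) := by
  rw [Es_eq_Ecoset, Es_eq_Ecoset]
  by_cases hi : i = 1
  · subst hi
    refine disjoint_image_conjDiag_Ecoset_of_norm_apply_one hn (norm_cosetCenter_le_one _ _) ?_
    fin_cases j <;> simp_all [cosetCenter, e1, e2]
  · refine disjoint_image_conjDiag_Ecoset_of_norm_apply_two hn ?_ (norm_cosetCenter_le_one _ _)
    fin_cases i <;> simp_all [cosetCenter, e1, e3]

theorem image_conjDiag_Es_one_inter_Es_two {n : ℕ} (hn : 1 ≤ n) :
    conjDiag n '' Es 1 ∩ Es 2 =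
      univ.pi fun i => closedBall (![1, 2 ^ n, 1] i) ((2 : ℝ)⁻¹ ^ ![1, n + 1, 1] i) := by
  have hs : ∀ i, conjDiagScale n i ≠ 0 := by
    intro i
    fin_cases i <;> simp [conjDiagScale]
  rw [Es_eq_Ecoset, Es_eq_Ecoset, Ecoset_eq_univ_pi, Ecoset_eq_univ_pi, conjDiag_eq_mul,
    image_mul_univ_pi_closedBall hs, ← pi_inter_distrib]
  congr 1
  funext i
  fin_cases i
  · simp [cosetCenter, conjDiagScale, e2, e3]
  · show closedBall (2 ^ n * 1) (‖(2 : ℚ_[2]) ^ n‖ * 2⁻¹) ∩ closedBall 0 2⁻¹ =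
      closedBall (2 ^ n) (2⁻¹ ^ (n + 1))
    rw [mul_one, norm_pow, Padic.norm_two, ← pow_succ]
    refine inter_eq_left.2 (IsUltrametricDist.closedBall_subset_closedBall_of_mem ?_ ?_)
    · rw [mem_closedBall_zero_iff, norm_pow, Padic.norm_two]
      exact pow_le_of_le_one (by norm_num) (by norm_num) (by omega)
    · exact pow_le_of_le_one (by norm_num) (by norm_num) (by omega)
  · show closedBall ((2 ^ n)⁻¹ * 0) (‖((2 : ℚ_[2]) ^ n)⁻¹‖ * 2⁻¹) ∩ closedBall 1 2⁻¹ =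
      closedBall 1 (2⁻¹ ^ 1)
    rw [mul_zero, norm_inv, norm_pow, Padic.norm_two, inv_pow, inv_inv, pow_one]
    have h : (1 : ℝ) ≤ 2 ^ n * 2⁻¹ := by
      rw [← pow_sub_one_mul (by omega : n ≠ 0), mul_assoc, mul_inv_cancel₀ two_ne_zero, mul_one]
      exact one_le_pow₀ one_le_two
    refine inter_eq_right.2 (IsUltrametricDist.closedBall_subset_closedBall_of_mem ?_ ?_)
    · simpa using h
    · exact le_trans (by norm_num) h

theorem measure_image_conjDiag_Es_one_inter_Es_two [MeasurableSpace ℚ_[2]] [BorelSpace ℚ_[2]]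
    (μ : Measure B20) [μ.IsAddLeftInvariant] (hvol : μ {v : B20 | ∀ i, ‖v i‖ ≤ 1} = 1)
    {n : ℕ} (hn : 1 ≤ n) :
    μ (conjDiag n '' Es 1 ∩ Es 2) = 2⁻¹ ^ (3 + n) := by
  have hunit : {v : B20 | ∀ i, ‖v i‖ ≤ 1} = univ.pi fun _ => closedBall 0 1 := by
    ext v
    simp
  rw [image_conjDiag_Es_one_inter_Es_two hn]
  have := Padic.measure_univ_pi_closedBall_inv_pow μ (hunit ▸ hvol) ![1, 2 ^ n, 1] ![1, n + 1, 1]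
  simp only [Nat.cast_ofNat] at this
  have hsum : ∑ i, ![1, n + 1, 1] i = 3 + n := by
    rw [Fin.sum_univ_three]
    show 1 + (n + 1) + 1 = 3 + n
    omega
  rw [this, hsum, ENNReal.inv_pow]

/-- for `g = diag(2ⁿ,1)`, `n ≥ 1`, the inner products
`⟨1_{gEᵢg⁻¹}, 1_{Eⱼ}⟩ = μ(gEᵢg⁻¹ ∩ Eⱼ)` vanish unless `(i,j) = (2,3)`, when the
value is `2^{−3−n}`; consequently the sum over all `i, j` is `2^{−3−n}`. -/
theorem conj_coset_inner_products
    [MeasurableSpace ℚ_[2]] [BorelSpace ℚ_[2]]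
    (μ : Measure B20) [μ.IsAddHaarMeasure]
    (hvol : μ {v : B20 | ∀ i, ‖v i‖ ≤ 1} = 1)
    (n : ℕ) (hn : 1 ≤ n) :
    (∀ i j : Fin 3, μ (conjDiag n '' Es i ∩ Es j)
        = if i = 1 ∧ j = 2 then 2⁻¹ ^ (3 + n) else 0) ∧
    (∑ i : Fin 3, ∑ j : Fin 3, μ (conjDiag n '' Es i ∩ Es j)) = 2⁻¹ ^ (3 + n) := by
  have hmeasure : ∀ i j : Fin 3, μ (conjDiag n '' Es i ∩ Es j)
      = if i = 1 ∧ j = 2 then 2⁻¹ ^ (3 + n) else 0 := by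
    intro i j
    split_ifs with hij
    · obtain ⟨rfl, rfl⟩ := hij
      exact measure_image_conjDiag_Es_one_inter_Es_two μ hvol hn
    · rw [(disjoint_image_conjDiag_Es hn hij).inter_eq, measure_empty]
  refine ⟨hmeasure, ?_⟩
  simp [Fin.sum_univ_three, hmeasure]
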